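/- arXiv:1405.7302 — 2 statements merged into one kernel-verified Lean document; each statement's English description precedes it below -/
import Mathlib

section
/- Let X_1, …, X_n be real numbers, let m be an integer with 1 ≤ m < n, and let D be a real number such that Σ_{k=1}^m X_k = (m/n)·Σ_{k=1}^n X_k + D. Then Σ_{k=1}^n X_k² ≥ (1/n)·(Σ_{k=1}^n X_k)² + D²·n/(m·(n−m)). -/
open Finset

/-!
Split the `n` numbers into the first `m` and the remaining `n - m`, with block sums `A` and `B`.
Cauchy–Schwarz on each block gives `∑ Xₖ² ≥ A²/m + B²/(n-m)`, and the right-hand side equals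
`(A+B)²/n + D²n/(m(n-m))` exactly, since `D = (A(n-m) - Bm)/n`.
-/

theorem sq_div_add_sq_div_eq {p q : ℝ} (hp : 0 < p) (hq : 0 < q) (A B : ℝ) :
    A ^ 2 / p + B ^ 2 / q
      = (A + B) ^ 2 / (p + q) + (A - p / (p + q) * (A + B)) ^ 2 * (p + q) / (p * q) := by
  field_simp
  ring

theorem sq_sum_div_card_le_sum_sq {ι : Type*} (s : Finset ι) (f : ι → ℝ) :
    (∑ i ∈ s, f i) ^ 2 / #s ≤ ∑ i ∈ s, f i ^ 2 := by
  rcases s.eq_empty_or_nonempty with rfl | hs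
  · simp
  · rw [div_le_iff₀' (by exact_mod_cast hs.card_pos)]
    exact sq_sum_le_card_mul_sum_sq

theorem sq_sum_div_card_add_defect_le_sum_sq {ι : Type*} [DecidableEq ι] {s t : Finset ι}
    (hst : s ⊆ t) (hs : s.Nonempty) (hts : (t \ s).Nonempty) (f : ι → ℝ) (D : ℝ)
    (hD : ∑ i ∈ s, f i = (#s : ℝ) / #t * ∑ i ∈ t, f i + D) :
    (∑ i ∈ t, f i) ^ 2 / #t + D ^ 2 * #t / (#s * #(t \ s)) ≤ ∑ i ∈ t, f i ^ 2 := by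
  have hsplit (g : ι → ℝ) : ∑ i ∈ t, g i = ∑ i ∈ s, g i + ∑ i ∈ t \ s, g i := by
    rw [add_comm, sum_sdiff hst]
  have hcard : (#t : ℝ) = #s + #(t \ s) := by
    exact_mod_cast ((add_comm _ _).trans (card_sdiff_add_card_eq_card hst)).symm
  have hD' : D = ∑ i ∈ s, f i - #s / #t * ∑ i ∈ t, f i := by linarith
  have hidentity := sq_div_add_sq_div_eq (p := #s) (q := #(t \ s))
    (by exact_mod_cast hs.card_pos) (by exact_mod_cast hts.card_pos)
    (∑ i ∈ s, f i) (∑ i ∈ t \ s, f i)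
  rw [← hsplit, ← hcard, ← hD'] at hidentity
  rw [hsplit fun i ↦ f i ^ 2, ← hidentity]
  gcongr <;> exact sq_sum_div_card_le_sum_sq _ f

/-- The "defect form" of the Cauchy–Schwarz inequality: if the sum of the
first `m` of `n` real numbers deviates from its proportional share by `D`,
then `∑ Xₖ² ≥ (1/n)(∑ Xₖ)² + D²n/(m(n−m))`. -/
theorem defect_cauchy_schwarz (n m : ℕ) (hm : 1 ≤ m) (hmn : m < n)
    (X : ℕ → ℝ) (D : ℝ)
    (hD : ∑ k ∈ Finset.Icc 1 m, X k
        = ((m : ℝ) / (n : ℝ)) * ∑ k ∈ Finset.Icc 1 n, X k + D) :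
    ∑ k ∈ Finset.Icc 1 n, (X k) ^ 2
      ≥ (1 / (n : ℝ)) * (∑ k ∈ Finset.Icc 1 n, X k) ^ 2
        + D ^ 2 * (n : ℝ) / ((m : ℝ) * ((n : ℝ) - (m : ℝ))) := by
  have hsub : Icc 1 m ⊆ Icc 1 n := Icc_subset_Icc_right hmn.le
  have hcard_sdiff : (#(Icc 1 n \ Icc 1 m) : ℝ) = n - m := by
    rw [card_sdiff_of_subset hsub, Nat.card_Icc, Nat.card_Icc, Nat.add_sub_cancel,
      Nat.add_sub_cancel, Nat.cast_sub hmn.le]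
  have key := sq_sum_div_card_add_defect_le_sum_sq hsub
    (nonempty_Icc.mpr hm) ⟨n, by simp [hmn, hm.trans hmn.le]⟩ X D
    (by simpa only [Nat.card_Icc, Nat.add_sub_cancel] using hD)
  rw [hcard_sdiff, Nat.card_Icc, Nat.card_Icc, Nat.add_sub_cancel, Nat.add_sub_cancel] at key
  rw [ge_iff_le, one_div_mul_eq_div]
  exact key
end

section
/- Let U be a bipartite graph with parts X and Y, where |Y| = N ≥ 1, and let ε be a real number with 0 < ε ≤ 1/4. Suppose that all but at most εN vertices v ∈ Y satisfy deg_U(v) ≥ (1−ε)·e(U)/N, where e(U) is the number of edges of U. Then for every A ⊆ Y with |A| ≥ 4εN we have Σ_{x∈X} |N_U(x) ∩ A| ≥ (|A|/(2N))·e(U). -/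
/-! Double counting turns the edges into `A` into the sum of the degrees of the vertices of `A`.
At most `εN ≤ |A|/4` of these have degree below `(1-ε)e(U)/N`, so the sum is at least
`(3/4)|A| · (3/4)e(U)/N ≥ |A|e(U)/(2N)`. -/

open Finset

theorem Finset.card_le_card_filter_not_add_card_filter_of_subset {β : Type*}
    {A Y : Finset β} (hAY : A ⊆ Y) (p : β → Prop) [DecidablePred p] :
    #A ≤ #(A.filter fun y => ¬ p y) + #(Y.filter p) := by
  rw [← card_filter_add_card_filter_not p, add_comm]
  exact Nat.add_le_add_left (card_le_card (filter_subset_filter p hAY)) _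

theorem Finset.card_filter_le_nsmul_le_sum {ι M : Type*} [AddCommMonoid M] [PartialOrder M]
    [IsOrderedAddMonoid M] (s : Finset ι) (f : ι → M) (hf : ∀ i ∈ s, 0 ≤ f i) (d : M)
    [DecidablePred fun i => d ≤ f i] :
    #(s.filter fun i => d ≤ f i) • d ≤ ∑ i ∈ s, f i :=
  (card_nsmul_le_sum _ f d fun _ hi => (mem_filter.mp hi).2).trans
    (sum_le_sum_of_subset_of_nonneg (filter_subset _ s) fun i hi _ => hf i hi)

theorem edges_into_large_subset_general {α β : Type*}
    (X : Finset α) (Y : Finset β) (E : α → β → Prop)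
    [∀ a b, Decidable (E a b)]
    (N : ℕ)
    (ε : ℝ) (hε : ε ≤ 1 / 4)
    (hdeg : (((Y.filter fun v =>
        ((X.filter fun x => E x v).card : ℝ) <
          (1 - ε) * (((X ×ˢ Y).filter fun p => E p.1 p.2).card : ℝ) / (N : ℝ)).card : ℝ))
        ≤ ε * (N : ℝ))
    (A : Finset β) (hAY : A ⊆ Y) (hAcard : 4 * ε * (N : ℝ) ≤ (A.card : ℝ)) :
    ((A.card : ℝ) / (2 * (N : ℝ)))
        * (((X ×ˢ Y).filter fun p => E p.1 p.2).card : ℝ)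
      ≤ ∑ x ∈ X, (((A.filter fun y => E x y).card : ℝ)) := by
  set e : ℝ := (#((X ×ˢ Y).filter fun p => E p.1 p.2) : ℝ)
  set deg : β → ℝ := fun v => (#(X.filter fun x => E x v) : ℝ)
  set d := (1 - ε) * e / N
  have hcard_high : (#A : ℝ) ≤ #(A.filter fun v => d ≤ deg v) + ε * N := by
    have h := card_le_card_filter_not_add_card_filter_of_subset hAY fun v => deg v < d
    simp only [not_lt] at h
    calc (#A : ℝ) ≤ #(A.filter fun v => d ≤ deg v) + #(Y.filter fun v => deg v < d) := by
          exact_mod_cast h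
      _ ≤ #(A.filter fun v => d ≤ deg v) + ε * N := by gcongr
  have hsum := card_filter_le_nsmul_le_sum A deg (fun v _ => Nat.cast_nonneg _) d
  have hdouble : ∑ x ∈ X, (#(A.filter fun y => E x y) : ℝ) = ∑ v ∈ A, deg v := by
    simp only [deg, ← Nat.cast_sum]
    exact congrArg _ (sum_card_bipartiteAbove_eq_sum_card_bipartiteBelow E)
  rw [hdouble]
  rw [nsmul_eq_mul] at hsum
  have he : 0 ≤ e / N := div_nonneg (Nat.cast_nonneg _) N.cast_nonneg
  calc (#A : ℝ) / (2 * N) * e = (#A / 2) * (e / N) := by ring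
    _ ≤ ((1 - ε) * #(A.filter fun v => d ≤ deg v)) * (e / N) := by gcongr; nlinarith
    _ = #(A.filter fun v => d ≤ deg v) * d := by ring
    _ ≤ ∑ v ∈ A, deg v := hsum

/-- Let `U` be a bipartite graph with parts `X` and `Y` (modelled by the
adjacency relation `E`), `|Y| = N ≥ 1`, and `0 < ε ≤ 1/4`.  If all but at most
`εN` vertices `v ∈ Y` satisfy `deg_U(v) ≥ (1−ε)·e(U)/N`, then for every
`A ⊆ Y` with `|A| ≥ 4εN` the number of edges of `U` into `A`, namely
`∑_{x∈X} |N_U(x) ∩ A|`, is at least `(|A|/(2N))·e(U)`. -/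
theorem edges_into_large_subset {α β : Type*}
    (X : Finset α) (Y : Finset β) (E : α → β → Prop)
    [∀ a b, Decidable (E a b)]
    (N : ℕ) (hN : 1 ≤ N) (hYcard : Y.card = N)
    (ε : ℝ) (hε0 : 0 < ε) (hε : ε ≤ 1 / 4)
    (hdeg : (((Y.filter fun v =>
        ((X.filter fun x => E x v).card : ℝ) <
          (1 - ε) * (((X ×ˢ Y).filter fun p => E p.1 p.2).card : ℝ) / (N : ℝ)).card : ℝ))
        ≤ ε * (N : ℝ))
    (A : Finset β) (hAY : A ⊆ Y) (hAcard : 4 * ε * (N : ℝ) ≤ (A.card : ℝ)) :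
    ((A.card : ℝ) / (2 * (N : ℝ)))
        * (((X ×ˢ Y).filter fun p => E p.1 p.2).card : ℝ)
      ≤ ∑ x ∈ X, (((A.filter fun y => E x y).card : ℝ)) :=
  edges_into_large_subset_general X Y E N ε hε hdeg A hAY hAcard
end
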